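/- The maximum absolute determinant of an n×n upper Hessenberg matrix with subdiagonal entries fixed at 1 and upper-triangular entries from {0,1,…,d} (d a positive integer) equals M_n, where M_1 = d, M_2 = d², and M_n = d·M_{n−1} + M_{n−2} for n ≥ 3. -/

import Mathlib

/-- `A` is an `n×n` upper Hessenberg matrix with subdiagonal entries `1`
and upper-triangular entries in `{0,1,…,d}`. -/
def IsUpperHessenbergRange (d : ℕ) {n : ℕ} (A : Matrix (Fin n) (Fin n) ℝ) : Prop :=
  (∀ i j : Fin n, (i : ℕ) = (j : ℕ) + 1 → A i j = 1) ∧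
  (∀ i j : Fin n, (j : ℕ) + 1 < (i : ℕ) → A i j = 0) ∧
  (∀ i j : Fin n, (i : ℕ) ≤ (j : ℕ) → ∃ k : ℕ, k ≤ d ∧ A i j = (k : ℝ))

/-- `M 1 = d`, `M 2 = d²`, `M n = d·M (n-1) + M (n-2)`. -/
def seqMd (d : ℕ) : ℕ → ℝ
  | 0 => 1
  | 1 => (d : ℝ)
  | 2 => (d : ℝ) ^ 2
  | (n + 3) => (d : ℝ) * seqMd d (n + 2) + seqMd d (n + 1)

/-!
Let `D k` be the leading principal `k × k` minor and `s k = (-1)^k D k`. Expanding along the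
last column gives `s (k+1) = -∑_{i ≤ k} a_{ik} s i` with `a_{ik} ∈ [0, d]`, so `s (k+1)` lies
between `-d P` and `d N`, where `P` and `N` are the sums of the positive and negative parts of
`s 0, …, s k`. Each step enlarges only one of `P`, `N`, so the larger of the two stays below
`U (k+1)` and the smaller below `U k`, where `U = genFib d` is given by `U 0 = 0`, `U 1 = 1`,
`U (k+2) = d U (k+1) + U k`. Hence `|D n| ≤ d U n = M n`, with equality for the matrix having
`d` at the positions `i ≤ j` with `i + j` even.
-/

open Finset

variable {R : Type*}

def genFib [Semiring R] (d : R) : ℕ → R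
  | 0 => 0
  | 1 => 1
  | n + 2 => d * genFib d (n + 1) + genFib d n

theorem genFib_add_two [Semiring R] (d : R) (n : ℕ) :
    genFib d (n + 2) = d * genFib d (n + 1) + genFib d n :=
  rfl

theorem genFib_nonneg {d : ℝ} (hd : 0 ≤ d) (n : ℕ) : 0 ≤ genFib d n := by
  induction n using Nat.twoStepInduction with
  | zero => exact le_rfl
  | one => exact zero_le_one
  | more n ih₀ ih₁ => rw [genFib_add_two]; positivity

theorem seqMd_eq_mul_genFib (d n : ℕ) : seqMd d (n + 1) = d * genFib (d : ℝ) (n + 1) := by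
  induction n using Nat.twoStepInduction with
  | zero => simp [seqMd, genFib]
  | one => simp [seqMd, genFib]; ring
  | more n ih₀ ih₁ =>
    rw [seqMd, ih₀, ih₁, genFib_add_two _ (n + 1)]
    ring

theorem eq_mul_genFib_of_parity_sum [CommRing R] {d : R} {t : ℕ → R} (h₀ : t 0 = 1)
    (h : ∀ n, t (n + 1) = d * ∑ i ∈ range (n + 1), if Even (i + n) then t i else 0) (n : ℕ) :
    t (n + 1) = d * genFib d (n + 1) := by
  suffices hS : ∀ n, (∑ i ∈ range (n + 1), if Even (i + n) then t i else 0) = genFib d (n + 1) by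
    rw [h, hS]
  intro n
  induction n using Nat.twoStepInduction with
  | zero => simp [h₀, genFib]
  | one => simp [sum_range_succ, h 0, h₀, genFib]
  | more n ih₀ ih₁ =>
    have hshift (i : ℕ) : Even (i + (n + 2)) ↔ Even (i + n) := by
      simp [← add_assoc, Nat.even_add]
    have hodd : ¬ Even (n + 1 + (n + 2)) := by
      rw [Nat.not_even_iff_odd]
      exact ⟨n + 1, by ring⟩
    have hnext : t (n + 2) = d * genFib d (n + 2) := by rw [h (n + 1), ih₁]
    rw [sum_range_succ, sum_range_succ, if_neg hodd, if_pos ⟨n + 2, rfl⟩, hnext]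
    simp_rw [hshift, ih₀, genFib_add_two d (n + 1)]
    ring

theorem sum_mul_le_mul_sum_posPart {ι : Type*} {t : Finset ι} {a x : ι → ℝ} {d : ℝ}
    (ha : ∀ i ∈ t, a i ∈ Set.Icc 0 d) : ∑ i ∈ t, a i * x i ≤ d * ∑ i ∈ t, (x i)⁺ := by
  rw [mul_sum]
  refine sum_le_sum fun i hi => ?_
  obtain ⟨ha₀, had⟩ := ha i hi
  calc a i * x i ≤ a i * (x i)⁺ := mul_le_mul_of_nonneg_left (le_posPart _) ha₀
    _ ≤ d * (x i)⁺ := mul_le_mul_of_nonneg_right had (posPart_nonneg _)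

theorem le_mul_sum_negPart_of_eq_neg_sum {ι : Type*} {t : Finset ι} {a x : ι → ℝ} {d y : ℝ}
    (ha : ∀ i ∈ t, a i ∈ Set.Icc 0 d) (hy : y = -∑ i ∈ t, a i * x i) :
    y ≤ d * ∑ i ∈ t, (x i)⁻ ∧ -y ≤ d * ∑ i ∈ t, (x i)⁺ := by
  constructor
  · simp_rw [hy, ← sum_neg_distrib, ← mul_neg, ← posPart_neg]
    exact sum_mul_le_mul_sum_posPart ha
  · rw [hy, neg_neg]
    exact sum_mul_le_mul_sum_posPart ha

theorem max_min_add_posPart_negPart_le {d P N x : ℝ} (hd : 1 ≤ d) (hP : 0 ≤ P) (hN : 0 ≤ N)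
    (hx : x ≤ d * N) (hx' : -x ≤ d * P) :
    max (P + x⁺) (N + x⁻) ≤ d * max P N + min P N ∧ min (P + x⁺) (N + x⁻) ≤ max P N := by
  rcases le_total 0 x with h | h
  · rw [posPart_eq_self.2 h, negPart_eq_zero.2 h]
    rcases le_total P N with h' | h' <;> simp [h'] <;> constructor <;> nlinarith
  · rw [posPart_eq_zero.2 h, negPart_eq_neg.2 h]
    rcases le_total P N with h' | h' <;> simp [h'] <;> constructor <;> nlinarith

section SignedBounds

variable {d : ℝ} {s : ℕ → ℝ}

theorem max_min_sum_posPart_negPart_le (hd : 1 ≤ d) (hs₀ : s 0 = 1) (n : ℕ)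
    (hs : ∀ k < n, s (k + 1) ≤ d * ∑ i ∈ range (k + 1), (s i)⁻ ∧
      -s (k + 1) ≤ d * ∑ i ∈ range (k + 1), (s i)⁺) :
    max (∑ i ∈ range (n + 1), (s i)⁺) (∑ i ∈ range (n + 1), (s i)⁻) ≤ genFib d (n + 1) ∧
      min (∑ i ∈ range (n + 1), (s i)⁺) (∑ i ∈ range (n + 1), (s i)⁻) ≤ genFib d n := by
  induction n with
  | zero => simp [genFib, hs₀]
  | succ n ih =>
    obtain ⟨hmax, hmin⟩ := ih fun k hk => hs k (by omega)
    obtain ⟨hx, hx'⟩ := hs n n.lt_succ_self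
    obtain ⟨hmax', hmin'⟩ := max_min_add_posPart_negPart_le hd
      (sum_nonneg fun i _ => posPart_nonneg (s i)) (sum_nonneg fun i _ => negPart_nonneg (s i))
      hx hx'
    rw [sum_range_succ, sum_range_succ (fun i => (s i)⁻), genFib_add_two]
    refine ⟨hmax'.trans ?_, hmin'.trans hmax⟩
    gcongr

theorem abs_le_mul_genFib (hd : 1 ≤ d) (hs₀ : s 0 = 1) (n : ℕ)
    (hs : ∀ k ≤ n, s (k + 1) ≤ d * ∑ i ∈ range (k + 1), (s i)⁻ ∧
      -s (k + 1) ≤ d * ∑ i ∈ range (k + 1), (s i)⁺) :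
    |s (n + 1)| ≤ d * genFib d (n + 1) := by
  obtain ⟨hmax, -⟩ := max_min_sum_posPart_negPart_le hd hs₀ n fun k hk => hs k hk.le
  obtain ⟨hx, hx'⟩ := hs n le_rfl
  have hd₀ : 0 ≤ d := by linarith
  have hP := mul_le_mul_of_nonneg_left ((le_max_left _ _).trans hmax) hd₀
  have hN := mul_le_mul_of_nonneg_left ((le_max_right _ _).trans hmax) hd₀
  rw [abs_le]
  constructor <;> linarith

end SignedBounds

namespace Matrix

variable [CommRing R] {n m : ℕ}

def IsUnitHessenberg (A : Matrix (Fin n) (Fin n) R) : Prop :=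
  (∀ i j : Fin n, (i : ℕ) = j + 1 → A i j = 1) ∧ (∀ i j : Fin n, (j : ℕ) + 1 < i → A i j = 0)

def leadingMinor (A : Matrix (Fin n) (Fin n) R) (k : ℕ) : R :=
  if h : k ≤ n then (A.submatrix (Fin.castLE h) (Fin.castLE h)).det else 0

theorem leadingMinor_zero (A : Matrix (Fin n) (Fin n) R) : A.leadingMinor 0 = 1 := by
  simp [leadingMinor]

theorem leadingMinor_self (A : Matrix (Fin n) (Fin n) R) : A.leadingMinor n = A.det := by
  simp [leadingMinor]

theorem leadingMinor_eq_det_submatrix_castSucc (A : Matrix (Fin (n + 1)) (Fin (n + 1)) R) :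
    A.leadingMinor n = (A.submatrix Fin.castSucc Fin.castSucc).det :=
  dif_pos n.le_succ

theorem leadingMinor_submatrix_castLE (A : Matrix (Fin n) (Fin n) R) (h : m ≤ n) {k : ℕ}
    (hk : k ≤ m) :
    (A.submatrix (Fin.castLE h) (Fin.castLE h)).leadingMinor k = A.leadingMinor k := by
  simp [leadingMinor, hk, hk.trans h, submatrix_submatrix, Fin.castLE_comp_castLE]

namespace IsUnitHessenberg

theorem submatrix_castLE {A : Matrix (Fin n) (Fin n) R} (hA : A.IsUnitHessenberg) (h : m ≤ n) :
    (A.submatrix (Fin.castLE h) (Fin.castLE h)).IsUnitHessenberg :=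
  ⟨fun _ _ hij => hA.1 _ _ hij, fun _ _ hij => hA.2 _ _ hij⟩

/- Deleting row `i` and the last column leaves a block upper triangular matrix whose lower
block is unitriangular: its last row has the single nonzero entry `1`, in its last column. -/
theorem det_submatrix_succAbove_castSucc {A : Matrix (Fin (n + 1)) (Fin (n + 1)) R}
    (hA : A.IsUnitHessenberg) (i : Fin (n + 1)) :
    (A.submatrix i.succAbove Fin.castSucc).det = A.leadingMinor i := by
  induction n with
  | zero =>
    obtain rfl : i = Fin.last 0 := Fin.ext (by omega)
    rw [Fin.succAbove_last, Fin.val_last, leadingMinor_eq_det_submatrix_castSucc]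
  | succ n ih =>
    induction i using Fin.lastCases with
    | last => rw [Fin.succAbove_last, Fin.val_last, leadingMinor_eq_det_submatrix_castSucc]
    | cast i =>
      have hlast : i.castSucc.succAbove (Fin.last n) = Fin.last (n + 1) := by simp
      have hcomm : i.castSucc.succAbove ∘ Fin.castSucc = Fin.castSucc ∘ i.succAbove :=
        funext fun j => Fin.castSucc_succAbove_castSucc
      rw [det_succ_row _ (Fin.last n), Fin.sum_univ_castSucc, sum_eq_zero, zero_add]
      · simp only [Fin.val_last, Even.add_self, Even.neg_pow, one_pow, one_mul, submatrix_apply,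
          hlast, Fin.val_castSucc, hA.1, mul_one, Fin.succAbove_last, submatrix_submatrix]
        rw [hcomm, ← submatrix_submatrix]
        exact (ih (hA.submatrix_castLE (n + 1).le_succ) i).trans
          (leadingMinor_submatrix_castLE A (n + 1).le_succ i.is_le')
      · intro j _
        simp [hlast, hA.2 (Fin.last (n + 1)) j.castSucc.castSucc (by simp)]

theorem det_eq_sum_leadingMinor {A : Matrix (Fin (n + 1)) (Fin (n + 1)) R}
    (hA : A.IsUnitHessenberg) :
    A.det = ∑ i : Fin (n + 1), (-1) ^ ((i : ℕ) + n) * A i (Fin.last n) * A.leadingMinor i := by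
  simp_rw [det_succ_column A (Fin.last n), Fin.succAbove_last,
    hA.det_submatrix_succAbove_castSucc, Fin.val_last]

theorem neg_one_pow_mul_det {A : Matrix (Fin (n + 1)) (Fin (n + 1)) R}
    (hA : A.IsUnitHessenberg) :
    (-1) ^ (n + 1) * A.det =
      -∑ i : Fin (n + 1), A i (Fin.last n) * ((-1) ^ (i : ℕ) * A.leadingMinor i) := by
  have hsq : ((-1 : R) ^ n) * (-1) ^ n = 1 := by rw [← mul_pow]; simp
  rw [hA.det_eq_sum_leadingMinor, mul_sum, ← sum_neg_distrib]
  refine sum_congr rfl fun i _ => ?_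
  rw [pow_add, pow_succ]
  linear_combination (-(A i (Fin.last n)) * (-1) ^ (i : ℕ) * A.leadingMinor i) * hsq

theorem neg_one_pow_mul_leadingMinor_succ {A : Matrix (Fin n) (Fin n) R} (hA : A.IsUnitHessenberg)
    {k : ℕ} (hk : k + 1 ≤ n) :
    (-1) ^ (k + 1) * A.leadingMinor (k + 1) = -∑ i : Fin (k + 1),
      A (Fin.castLE hk i) (Fin.castLE hk (Fin.last k)) * ((-1) ^ (i : ℕ) * A.leadingMinor i) := by
  rw [leadingMinor, dif_pos hk, (hA.submatrix_castLE hk).neg_one_pow_mul_det]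
  refine congrArg Neg.neg (sum_congr rfl fun i _ => ?_)
  rw [leadingMinor_submatrix_castLE A hk i.is_le', submatrix_apply]

theorem abs_det_le {d : ℝ} (hd : 1 ≤ d) {A : Matrix (Fin (n + 1)) (Fin (n + 1)) ℝ}
    (hA : A.IsUnitHessenberg) (hent : ∀ i j : Fin (n + 1), (i : ℕ) ≤ j → A i j ∈ Set.Icc 0 d) :
    |A.det| ≤ d * genFib d (n + 1) := by
  set s : ℕ → ℝ := fun k => (-1) ^ k * A.leadingMinor k
  have hs (k : ℕ) (hk : k ≤ n) :
      s (k + 1) ≤ d * ∑ i ∈ range (k + 1), (s i)⁻ ∧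
        -s (k + 1) ≤ d * ∑ i ∈ range (k + 1), (s i)⁺ := by
    rw [← Fin.sum_univ_eq_sum_range (fun i => (s i)⁻),
      ← Fin.sum_univ_eq_sum_range (fun i => (s i)⁺)]
    exact le_mul_sum_negPart_of_eq_neg_sum (fun i _ => hent _ _ i.is_le)
      (hA.neg_one_pow_mul_leadingMinor_succ (Nat.succ_le_succ hk))
  simpa [s, abs_mul, leadingMinor_self] using
    abs_le_mul_genFib hd (by simp [s, leadingMinor_zero]) n hs

end IsUnitHessenberg

def checkerboardHessenberg (d : R) (n : ℕ) : Matrix (Fin n) (Fin n) R :=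
  of fun i j => if (i : ℕ) = j + 1 then 1 else if i ≤ j ∧ Even ((i : ℕ) + j) then d else 0

theorem isUnitHessenberg_checkerboardHessenberg (d : R) (n : ℕ) :
    (checkerboardHessenberg d n).IsUnitHessenberg :=
  ⟨fun i j h => by simp [checkerboardHessenberg, h],
    fun i j h => by
      simp [checkerboardHessenberg, show (i : ℕ) ≠ j + 1 by omega, show ¬ i ≤ j by omega]⟩

theorem checkerboardHessenberg_apply_of_le (d : R) {i j : Fin n} (h : i ≤ j) :
    checkerboardHessenberg d n i j = if Even ((i : ℕ) + j) then d else 0 := by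
  simp [checkerboardHessenberg, h, show (i : ℕ) ≠ j + 1 by omega]

theorem leadingMinor_checkerboardHessenberg (d : R) {k : ℕ} (hk : k ≤ n) :
    (checkerboardHessenberg d n).leadingMinor k = (checkerboardHessenberg d k).det :=
  dif_pos hk

theorem det_checkerboardHessenberg_succ (d : R) (n : ℕ) :
    (checkerboardHessenberg d (n + 1)).det =
      d * ∑ i ∈ range (n + 1), if Even (i + n) then (checkerboardHessenberg d i).det else 0 := by
  rw [(isUnitHessenberg_checkerboardHessenberg d (n + 1)).det_eq_sum_leadingMinor, mul_sum,
    ← Fin.sum_univ_eq_sum_range]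
  refine sum_congr rfl fun i _ => ?_
  rw [leadingMinor_checkerboardHessenberg d i.is_le',
    checkerboardHessenberg_apply_of_le d i.le_last, Fin.val_last]
  split_ifs with hi
  · rw [hi.neg_one_pow]; ring
  · simp

theorem det_checkerboardHessenberg (d : R) (n : ℕ) :
    (checkerboardHessenberg d (n + 1)).det = d * genFib d (n + 1) :=
  eq_mul_genFib_of_parity_sum (t := fun k => (checkerboardHessenberg d k).det) det_fin_zero
    (det_checkerboardHessenberg_succ d) n

end Matrix

theorem IsUpperHessenbergRange.abs_det_le {d n : ℕ} (hd : 1 ≤ d)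
    {A : Matrix (Fin (n + 1)) (Fin (n + 1)) ℝ} (hA : IsUpperHessenbergRange d A) :
    |A.det| ≤ d * genFib (d : ℝ) (n + 1) := by
  obtain ⟨h₁, h₂, hent⟩ := hA
  refine Matrix.IsUnitHessenberg.abs_det_le (by exact_mod_cast hd) ⟨h₁, h₂⟩ fun i j hij => ?_
  obtain ⟨k, hk, hAk⟩ := hent i j hij
  exact hAk ▸ ⟨k.cast_nonneg, by exact_mod_cast hk⟩

theorem isUpperHessenbergRange_checkerboardHessenberg (d n : ℕ) :
    IsUpperHessenbergRange d (Matrix.checkerboardHessenberg (d : ℝ) n) := by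
  obtain ⟨h₁, h₂⟩ := Matrix.isUnitHessenberg_checkerboardHessenberg (d : ℝ) n
  refine ⟨h₁, h₂, fun i j hij => ?_⟩
  rw [Matrix.checkerboardHessenberg_apply_of_le _ hij]
  split_ifs
  exacts [⟨d, le_rfl, rfl⟩, ⟨0, Nat.zero_le _, Nat.cast_zero.symm⟩]

theorem max_abs_det_population_zero_to_d (d : ℕ) (hd : 1 ≤ d) :
    ∀ n : ℕ, 1 ≤ n →
      IsGreatest {x : ℝ | ∃ A : Matrix (Fin n) (Fin n) ℝ,
        IsUpperHessenbergRange d A ∧ x = |A.det|} (seqMd d n) := by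
  intro n hn
  obtain ⟨n, rfl⟩ : ∃ m, n = m + 1 := ⟨n - 1, by omega⟩
  rw [seqMd_eq_mul_genFib]
  refine ⟨⟨_, isUpperHessenbergRange_checkerboardHessenberg d (n + 1), ?_⟩, ?_⟩
  · rw [Matrix.det_checkerboardHessenberg,
      abs_of_nonneg (mul_nonneg d.cast_nonneg (genFib_nonneg d.cast_nonneg _))]
  · rintro _ ⟨A, hA, rfl⟩
    exact hA.abs_det_le hd
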